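/- arXiv:1211.4664 — 4 statements merged into one kernel-verified Lean document; each statement's English description precedes it below -/
import Mathlib

section
/- The infimum of P₀ over the feasible set X equals the infimum over μ ∈ [μ₀, 1/δ] of the infimum of P₀ over the level set {x ∈ ℝ^n : h(x) = 1/μ}; i.e., the feasible set X decomposes into the level sets of h with levels 1/μ, μ ∈ [μ₀, 1/δ]. -/
open Matrix Set Filter

noncomputable section

/-- `q(x) = ½ xᵀQx − cᵀx`. -/
def qfun {n : ℕ} (Q : Matrix (Fin n) (Fin n) ℝ) (c : Fin n → ℝ) (x : Fin n → ℝ) : ℝ :=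
  (1/2) * (x ⬝ᵥ (Q *ᵥ x)) - c ⬝ᵥ x

/-- `g(x) = ½ (½|Bx|² − λ)²`. -/
def gfun {n m : ℕ} (B : Matrix (Fin m) (Fin n) ℝ) (lam : ℝ) (x : Fin n → ℝ) : ℝ :=
  (1/2) * ((1/2) * ((B *ᵥ x) ⬝ᵥ (B *ᵥ x)) - lam)^2

/-- `h(x) = ½ xᵀHx − bᵀx`. -/
def hfun {n : ℕ} (H : Matrix (Fin n) (Fin n) ℝ) (b : Fin n → ℝ) (x : Fin n → ℝ) : ℝ :=
  (1/2) * (x ⬝ᵥ (H *ᵥ x)) - b ⬝ᵥ x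

/-- `G_μ(ς,σ) = Q + μς BᵀB − σH`. -/
def Gmu {n m : ℕ} (Q : Matrix (Fin n) (Fin n) ℝ) (B : Matrix (Fin m) (Fin n) ℝ)
    (H : Matrix (Fin n) (Fin n) ℝ) (μ ς σ : ℝ) : Matrix (Fin n) (Fin n) ℝ :=
  Q + (μ * ς) • (Bᵀ * B) - σ • H

/-- The dual feasible set `S_μ⁺`. -/
def Smu {n m : ℕ} (Q : Matrix (Fin n) (Fin n) ℝ) (B : Matrix (Fin m) (Fin n) ℝ)
    (H : Matrix (Fin n) (Fin n) ℝ) (lam μ : ℝ) : Set (ℝ × ℝ) :=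
  {p : ℝ × ℝ | -lam ≤ p.1 ∧ 0 ≤ p.2 ∧ (Gmu Q B H μ p.1 p.2).PosDef}

/-- The canonical dual function `P^d_μ(ς,σ)`. -/
def Pd {n m : ℕ} (Q : Matrix (Fin n) (Fin n) ℝ) (B : Matrix (Fin m) (Fin n) ℝ)
    (H : Matrix (Fin n) (Fin n) ℝ) (lam : ℝ) (c b : Fin n → ℝ) (μ ς σ : ℝ) : ℝ :=
  -(1/2) * ((c - σ • b) ⬝ᵥ ((Gmu Q B H μ ς σ)⁻¹ *ᵥ (c - σ • b)))
    - μ * lam * ς - (μ/2) * ς^2 + σ/μ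

/-- The total complementary function `Ξ_μ(x,ς,σ)`. -/
def Xi {n m : ℕ} (Q : Matrix (Fin n) (Fin n) ℝ) (B : Matrix (Fin m) (Fin n) ℝ)
    (H : Matrix (Fin n) (Fin n) ℝ) (lam : ℝ) (c b : Fin n → ℝ)
    (μ : ℝ) (x : Fin n → ℝ) (ς σ : ℝ) : ℝ :=
  (1/2) * (x ⬝ᵥ (Gmu Q B H μ ς σ *ᵥ x)) - (c - σ • b) ⬝ᵥ x
    - μ * lam * ς - (μ/2) * ς^2 + σ/μ

/-! Since `-H` is positive definite, `h` is a concave quadratic,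
`h x = h x₀ + ½ (x - x₀)ᵀ H (x - x₀)` with `x₀ = H⁻¹ b`, so `h ≤ h x₀ = 1 / μ₀` and
`X = ⋃ μ ∈ [μ₀, 1/δ], {h = 1/μ}`. Each of these level sets is nonempty by the intermediate value
theorem, as `h 0 = 0 ≤ 1/μ ≤ h x₀`. The same expansion makes `X` compact, and `P₀ ≥ q` on `X`,
so `P₀` is bounded below on `X`; the infimum over a union of nonempty sets is then the infimum
of the infima. -/

theorem Matrix.PosDef.exists_pos_mul_norm_sq_le {ι : Type*} [Fintype ι] {M : Matrix ι ι ℝ}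
    (hM : M.PosDef) : ∃ ε > 0, ∀ x : ι → ℝ, ε * ‖x‖ ^ 2 ≤ x ⬝ᵥ (M *ᵥ x) := by
  have hcont : Continuous fun x : ι → ℝ => x ⬝ᵥ (M *ᵥ x) := by fun_prop
  have hpos : ∀ x ∈ Metric.sphere (0 : ι → ℝ) 1, 0 < x ⬝ᵥ (M *ᵥ x) := fun x hx => by
    simpa using hM.dotProduct_mulVec_pos (ne_zero_of_mem_unit_sphere ⟨x, hx⟩)
  obtain ⟨ε, hε, hmin⟩ := (isCompact_sphere 0 1).exists_forall_le' hcont.continuousOn hpos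
  refine ⟨ε, hε, fun x => ?_⟩
  rcases eq_or_ne x 0 with rfl | hx
  · simp
  have h := hmin (‖x‖⁻¹ • x) (by simpa using norm_smul_inv_norm (𝕜 := ℝ) hx)
  rw [mulVec_smul, smul_dotProduct, dotProduct_smul, smul_eq_mul, smul_eq_mul, ← mul_assoc,
    ← sq, inv_pow, inv_mul_eq_div, le_div_iff₀ (by positivity)] at h
  exact h

theorem csInf_image_biUnion {α ι β : Type*} [ConditionallyCompleteLattice β] {f : α → β}
    {I : Set ι} {L : ι → Set α} (hI : I.Nonempty) (hL : ∀ i ∈ I, (L i).Nonempty)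
    (hbdd : BddBelow (f '' ⋃ i ∈ I, L i)) :
    sInf (f '' ⋃ i ∈ I, L i) = sInf ((fun i => sInf (f '' L i)) '' I) := by
  have hsub : ∀ i ∈ I, f '' L i ⊆ f '' ⋃ i ∈ I, L i := fun i hi =>
    image_mono (subset_biUnion_of_mem hi)
  have hle : ∀ i ∈ I, sInf (f '' ⋃ i ∈ I, L i) ≤ sInf (f '' L i) := fun i hi =>
    csInf_le_csInf hbdd ((hL i hi).image f) (hsub i hi)
  apply le_antisymm
  · exact le_csInf (hI.image _) (forall_mem_image.2 hle)
  · obtain ⟨i₀, hi₀⟩ := hI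
    refine le_csInf (((hL i₀ hi₀).mono (subset_biUnion_of_mem hi₀)).image f)
      (forall_mem_image.2 fun x hx => ?_)
    obtain ⟨i, hi, hxi⟩ := mem_iUnion₂.1 hx
    calc sInf ((fun i => sInf (f '' L i)) '' I) ≤ sInf (f '' L i) :=
          csInf_le ⟨sInf (f '' ⋃ i ∈ I, L i), forall_mem_image.2 hle⟩ (mem_image_of_mem _ hi)
      _ ≤ f x := csInf_le (hbdd.mono (hsub i hi)) (mem_image_of_mem f hxi)

theorem setOf_le_eq_biUnion_setOf_eq_one_div {α : Type*} {h : α → ℝ} {δ M : ℝ} (hδ : 0 < δ)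
    (hM : 0 < M) (hle : ∀ x, h x ≤ M) :
    {x | δ ≤ h x} = ⋃ μ ∈ Icc (1 / M) (1 / δ), {x | h x = 1 / μ} := by
  ext x
  simp only [mem_ofPred_eq, mem_iUnion, mem_Icc, exists_prop]
  constructor
  · intro hx
    have hpos : 0 < h x := hδ.trans_le hx
    exact ⟨1 / h x, ⟨one_div_le_one_div_of_le hpos (hle x), one_div_le_one_div_of_le hδ hx⟩,
      (one_div_one_div _).symm⟩
  · rintro ⟨μ, ⟨hMμ, hμδ⟩, hx⟩
    rw [hx, le_one_div hδ ((one_div_pos.2 hM).trans_le hMμ)]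
    exact hμδ

theorem continuous_qfun {n : ℕ} (Q : Matrix (Fin n) (Fin n) ℝ) (c : Fin n → ℝ) :
    Continuous (qfun Q c) := by
  unfold qfun
  fun_prop

theorem gfun_nonneg {n m : ℕ} (B : Matrix (Fin m) (Fin n) ℝ) (lam : ℝ) (x : Fin n → ℝ) :
    0 ≤ gfun B lam x := by
  unfold gfun
  positivity

section LevelSets

variable {n : ℕ} {H : Matrix (Fin n) (Fin n) ℝ} {b : Fin n → ℝ}

theorem continuous_hfun : Continuous (hfun H b) := by
  unfold hfun
  fun_prop

theorem hfun_add_of_mulVec_eq (hH : H.IsSymm) {x₀ : Fin n → ℝ} (hx₀ : H *ᵥ x₀ = b)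
    (y : Fin n → ℝ) : hfun H b (x₀ + y) = hfun H b x₀ + 1 / 2 * (y ⬝ᵥ (H *ᵥ y)) := by
  have hcross : x₀ ⬝ᵥ (H *ᵥ y) = b ⬝ᵥ y := by
    rw [dotProduct_mulVec, ← mulVec_transpose, hH.eq, hx₀]
  simp only [hfun, mulVec_add, dotProduct_add, add_dotProduct, hcross, hx₀,
    dotProduct_comm x₀ b, dotProduct_comm y b]
  ring

theorem hfun_eq_hfun_inv_mulVec_add (hH : (-H).PosDef) (x : Fin n → ℝ) :
    hfun H b x = hfun H b (H⁻¹ *ᵥ b) + 1 / 2 * ((x - H⁻¹ *ᵥ b) ⬝ᵥ (H *ᵥ (x - H⁻¹ *ᵥ b))) := by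
  have hsymm : H.IsSymm := by simpa [IsHermitian, IsSymm] using hH.isHermitian
  have hunit : IsUnit H.det := (isUnit_iff_isUnit_det H).1 (by simpa using hH.isUnit.neg)
  have hx₀ : H *ᵥ (H⁻¹ *ᵥ b) = b := by rw [mulVec_mulVec, mul_nonsing_inv H hunit, one_mulVec]
  rw [← hfun_add_of_mulVec_eq hsymm hx₀, add_sub_cancel]

theorem hfun_le_hfun_inv_mulVec (hH : (-H).PosDef) (x : Fin n → ℝ) :
    hfun H b x ≤ hfun H b (H⁻¹ *ᵥ b) := by
  have hneg : 0 ≤ -((x - H⁻¹ *ᵥ b) ⬝ᵥ (H *ᵥ (x - H⁻¹ *ᵥ b))) := by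
    simpa only [star_trivial, neg_mulVec, dotProduct_neg] using
      hH.posSemidef.dotProduct_mulVec_nonneg (x - H⁻¹ *ᵥ b)
  rw [hfun_eq_hfun_inv_mulVec_add hH x]
  linarith

theorem isCompact_setOf_le_hfun (hH : (-H).PosDef) (t : ℝ) :
    IsCompact {x | t ≤ hfun H b x} := by
  obtain ⟨ε, hε, hcoer⟩ := hH.exists_pos_mul_norm_sq_le
  refine Metric.isCompact_of_isClosed_isBounded (isClosed_le continuous_const continuous_hfun) ?_
  refine (Metric.isBounded_iff_subset_closedBall (H⁻¹ *ᵥ b)).2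
    ⟨√(2 * (hfun H b (H⁻¹ *ᵥ b) - t) / ε), fun x hx => ?_⟩
  have hx' := hcoer (x - H⁻¹ *ᵥ b)
  rw [neg_mulVec, dotProduct_neg] at hx'
  rw [mem_ofPred_eq, hfun_eq_hfun_inv_mulVec_add hH x] at hx
  rw [Metric.mem_closedBall, dist_eq_norm]
  exact Real.le_sqrt_of_sq_le (by rw [le_div_iff₀ hε]; linarith)

theorem exists_hfun_eq {t : ℝ} {x : Fin n → ℝ} (ht₀ : 0 ≤ t) (ht : t ≤ hfun H b x) :
    ∃ y, hfun H b y = t :=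
  intermediate_value_univ 0 x continuous_hfun ⟨by simpa [hfun] using ht₀, ht⟩

end LevelSets

theorem stmt_3_general {n m : ℕ}
    (Q : Matrix (Fin n) (Fin n) ℝ)
    (B : Matrix (Fin m) (Fin n) ℝ)
    (H : Matrix (Fin n) (Fin n) ℝ) (hHneg : (-H).PosDef)
    (lam : ℝ) (c b : Fin n → ℝ)
    (hpos : 0 < hfun H b (H⁻¹ *ᵥ b))
    (μ₀ : ℝ) (hμ₀ : μ₀ = 1 / hfun H b (H⁻¹ *ᵥ b))
    (δ : ℝ) (hδ : 0 < δ) (hδle : δ ≤ hfun H b (H⁻¹ *ᵥ b)) :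
    sInf ((fun x => qfun Q c x + gfun B lam x / hfun H b x) ''
        {x : Fin n → ℝ | δ ≤ hfun H b x}) =
      sInf ((fun μ => sInf ((fun x => qfun Q c x + gfun B lam x / hfun H b x) ''
        {x : Fin n → ℝ | hfun H b x = 1/μ})) '' Icc μ₀ (1/δ)) := by
  have hbdd : BddBelow ((fun x => qfun Q c x + gfun B lam x / hfun H b x) ''
      {x : Fin n → ℝ | δ ≤ hfun H b x}) := by
    obtain ⟨C, hC⟩ := (isCompact_setOf_le_hfun hHneg δ).bddBelow_image
      (continuous_qfun Q c).continuousOn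
    refine ⟨C, forall_mem_image.2 fun x hx => (hC (mem_image_of_mem _ hx)).trans ?_⟩
    exact le_add_of_nonneg_right (div_nonneg (gfun_nonneg B lam x) (hδ.le.trans hx))
  have hlevel : ∀ μ ∈ Icc μ₀ (1 / δ), {x : Fin n → ℝ | hfun H b x = 1 / μ}.Nonempty := by
    rintro μ ⟨hμ₀μ, -⟩
    have hμ : 0 < μ := (hμ₀ ▸ one_div_pos.2 hpos).trans_le hμ₀μ
    exact exists_hfun_eq (one_div_nonneg.2 hμ.le) ((one_div_le hμ hpos).2 (hμ₀ ▸ hμ₀μ))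
  rw [setOf_le_eq_biUnion_setOf_eq_one_div hδ hpos (hfun_le_hfun_inv_mulVec hHneg), ← hμ₀]
    at hbdd ⊢
  exact csInf_image_biUnion (nonempty_Icc.2 (hμ₀ ▸ one_div_le_one_div_of_le hδ hδle)) hlevel hbdd

/-- `inf_{x ∈ X} P₀(x) = inf_{μ ∈ [μ₀,1/δ]} inf_{h(x) = 1/μ} P₀(x)`. -/
theorem stmt_3 {n m : ℕ} (hn : 0 < n) (hm : 0 < m)
    (Q : Matrix (Fin n) (Fin n) ℝ) (hQsymm : Q.IsSymm)
    (B : Matrix (Fin m) (Fin n) ℝ)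
    (H : Matrix (Fin n) (Fin n) ℝ) (hHsymm : H.IsSymm) (hHneg : (-H).PosDef)
    (lam : ℝ) (hlam : 0 ≤ lam) (c b : Fin n → ℝ)
    (hpos : 0 < hfun H b (H⁻¹ *ᵥ b))
    (μ₀ : ℝ) (hμ₀ : μ₀ = 1 / hfun H b (H⁻¹ *ᵥ b))
    (δ : ℝ) (hδ : 0 < δ) (hδle : δ ≤ hfun H b (H⁻¹ *ᵥ b)) :
    sInf ((fun x => qfun Q c x + gfun B lam x / hfun H b x) ''
        {x : Fin n → ℝ | δ ≤ hfun H b x}) =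
      sInf ((fun μ => sInf ((fun x => qfun Q c x + gfun B lam x / hfun H b x) ''
        {x : Fin n → ℝ | hfun H b x = 1/μ})) '' Icc μ₀ (1/δ)) :=
  stmt_3_general Q B H hHneg lam c b hpos μ₀ hμ₀ δ hδ hδle
end
end

section
/- Fix μ > 0. For every x ∈ ℝ^n with h(x) ≥ 1/μ, every ς ∈ ℝ, and every σ ≥ 0, one has Ξ_μ(x,ς,σ) ≤ q(x) + μ g(x) = P_μ(x); i.e., the total complementary function is dominated by the parameterized objective on the primal feasible set. -/
open Matrix Set Filter

noncomputable section

theorem Matrix.dotProduct_transpose_mul_self_mulVec {R m n : Type*} [CommSemiring R]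
    [Fintype m] [Fintype n] (B : Matrix m n R) (x : n → R) :
    x ⬝ᵥ ((Bᵀ * B) *ᵥ x) = (B *ᵥ x) ⬝ᵥ (B *ᵥ x) := by
  rw [← mulVec_mulVec, dotProduct_mulVec, vecMul_transpose]

/-- Completing the square in `ς` and collecting the `σ`-terms. -/
theorem Xi_eq_qfun_add_gfun_sub {n m : ℕ} (Q : Matrix (Fin n) (Fin n) ℝ) (B : Matrix (Fin m) (Fin n) ℝ)
    (H : Matrix (Fin n) (Fin n) ℝ) (lam : ℝ) (c b : Fin n → ℝ) (μ : ℝ) (x : Fin n → ℝ)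
    (ς σ : ℝ) :
    Xi Q B H lam c b μ x ς σ = qfun Q c x + μ * gfun B lam x
      - μ / 2 * ((1/2) * ((B *ᵥ x) ⬝ᵥ (B *ᵥ x)) - lam - ς) ^ 2
      - σ * (hfun H b x - 1/μ) := by
  simp only [Xi, Gmu, qfun, gfun, hfun, sub_mulVec, add_mulVec, smul_mulVec,
    dotProduct_sub, dotProduct_add, dotProduct_smul, sub_dotProduct, smul_dotProduct,
    smul_eq_mul, dotProduct_transpose_mul_self_mulVec]
  ring

theorem stmt_10_general {n m : ℕ}
    (Q : Matrix (Fin n) (Fin n) ℝ)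
    (B : Matrix (Fin m) (Fin n) ℝ)
    (H : Matrix (Fin n) (Fin n) ℝ)
    (lam : ℝ) (c b : Fin n → ℝ)
    (μ : ℝ) (hμ : 0 < μ) :
    ∀ x : Fin n → ℝ, 1/μ ≤ hfun H b x → ∀ ς σ : ℝ, 0 ≤ σ →
      Xi Q B H lam c b μ x ς σ ≤ qfun Q c x + μ * gfun B lam x := by
  intro x hx ς σ hσ
  rw [Xi_eq_qfun_add_gfun_sub]
  have hsquare : 0 ≤ μ / 2 * ((1/2) * ((B *ᵥ x) ⬝ᵥ (B *ᵥ x)) - lam - ς) ^ 2 := by positivity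
  have hconstraint : 0 ≤ σ * (hfun H b x - 1/μ) := mul_nonneg hσ (sub_nonneg.mpr hx)
  linarith

/-- for `x` with `h(x) ≥ 1/μ`, all `ς ∈ ℝ` and all `σ ≥ 0`,
`Ξ_μ(x,ς,σ) ≤ P_μ(x) = q(x) + μ g(x)`. -/
theorem stmt_10 {n m : ℕ} (hn : 0 < n) (hm : 0 < m)
    (Q : Matrix (Fin n) (Fin n) ℝ) (hQsymm : Q.IsSymm)
    (B : Matrix (Fin m) (Fin n) ℝ)
    (H : Matrix (Fin n) (Fin n) ℝ) (hHsymm : H.IsSymm) (hHneg : (-H).PosDef)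
    (lam : ℝ) (hlam : 0 ≤ lam) (c b : Fin n → ℝ)
    (μ : ℝ) (hμ : 0 < μ) :
    ∀ x : Fin n → ℝ, 1/μ ≤ hfun H b x → ∀ ς σ : ℝ, 0 ≤ σ →
      Xi Q B H lam c b μ x ς σ ≤ qfun Q c x + μ * gfun B lam x :=
  stmt_10_general Q B H lam c b μ hμ
end
end

section
/- (Weak duality inequality) Fix μ > 0. For every x ∈ ℝ^n with h(x) ≥ 1/μ and every (ς,σ) ∈ S_μ⁺, one has P^d_μ(ς,σ) ≤ P_μ(x). -/
open Matrix Set Filter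

noncomputable section

/-!
The total complementary function `Ξ_μ(x,ς,σ)` separates the two sides. Completing the square
with `G_μ(ς,σ) ≻ 0` shows `P^d_μ(ς,σ) ≤ Ξ_μ(x,ς,σ)` for every `x`, with equality at
`x = G_μ(ς,σ)⁻¹(c − σb)`. Conversely `Ξ_μ = q(x) + μ(ςt − ς²/2) − σ(h(x) − 1/μ)` with
`t = ½|Bx|² − λ`, and `ςt − ς²/2 ≤ t²/2`, so `Ξ_μ(x,ς,σ) ≤ P_μ(x)` whenever `σ ≥ 0` and `h(x) ≥ 1/μ`.
-/

namespace Matrix.PosDef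

variable {ι : Type*} [Fintype ι] {G : Matrix ι ι ℝ}

theorem dotProduct_mulVec_comm (hG : G.PosDef) (x y : ι → ℝ) :
    y ⬝ᵥ (G *ᵥ x) = x ⬝ᵥ (G *ᵥ y) := by
  rw [dotProduct_mulVec, ← mulVec_transpose, isHermitian_iff_isSymm.mp hG.isHermitian,
    dotProduct_comm]

theorem mulVec_inv_mulVec [DecidableEq ι] (hG : G.PosDef) (v : ι → ℝ) :
    G *ᵥ (G⁻¹ *ᵥ v) = v := by
  rw [mulVec_mulVec, mul_nonsing_inv G (isUnit_iff_ne_zero.mpr hG.det_pos.ne'), one_mulVec]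

theorem neg_half_dotProduct_inv_mulVec_le [DecidableEq ι] (hG : G.PosDef) (v x : ι → ℝ) :
    -(1/2) * (v ⬝ᵥ (G⁻¹ *ᵥ v)) ≤ (1/2) * (x ⬝ᵥ (G *ᵥ x)) - v ⬝ᵥ x := by
  set y := G⁻¹ *ᵥ v
  have hGy : G *ᵥ y = v := hG.mulVec_inv_mulVec v
  have hsquare : (x - y) ⬝ᵥ (G *ᵥ (x - y)) = x ⬝ᵥ (G *ᵥ x) - 2 * (v ⬝ᵥ x) + v ⬝ᵥ y := by
    simp only [mulVec_sub, dotProduct_sub, sub_dotProduct, hG.dotProduct_mulVec_comm x y, hGy]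
    rw [dotProduct_comm x v, dotProduct_comm y v]
    ring
  have hnonneg : 0 ≤ (x - y) ⬝ᵥ (G *ᵥ (x - y)) := by
    simpa using hG.posSemidef.dotProduct_mulVec_nonneg (x - y)
  linarith

end Matrix.PosDef

section WeakDuality

variable {n m : ℕ} {Q H : Matrix (Fin n) (Fin n) ℝ} {B : Matrix (Fin m) (Fin n) ℝ}
  {lam μ : ℝ} {c b : Fin n → ℝ}

theorem Pd_le_Xi {ς σ : ℝ} (hG : (Gmu Q B H μ ς σ).PosDef) (x : Fin n → ℝ) :
    Pd Q B H lam c b μ ς σ ≤ Xi Q B H lam c b μ x ς σ := by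
  have := hG.neg_half_dotProduct_inv_mulVec_le (c - σ • b) x
  unfold Pd Xi
  linarith

theorem Xi_eq (hμ : μ ≠ 0) (x : Fin n → ℝ) (ς σ : ℝ) :
    Xi Q B H lam c b μ x ς σ = qfun Q c x
      + μ * (ς * ((1/2) * ((B *ᵥ x) ⬝ᵥ (B *ᵥ x)) - lam) - ς ^ 2 / 2)
      - σ * (hfun H b x - 1/μ) := by
  have hBB : x ⬝ᵥ ((Bᵀ * B) *ᵥ x) = (B *ᵥ x) ⬝ᵥ (B *ᵥ x) := by
    rw [← mulVec_mulVec, dotProduct_mulVec, vecMul_transpose]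
  simp only [Xi, qfun, hfun, Gmu, sub_mulVec, add_mulVec, smul_mulVec, dotProduct_sub,
    dotProduct_add, dotProduct_smul, sub_dotProduct, smul_dotProduct, hBB, smul_eq_mul]
  field_simp
  ring

theorem Xi_le_of_le_hfun (hμ : 0 < μ) {x : Fin n → ℝ} (hx : 1/μ ≤ hfun H b x) (ς : ℝ)
    {σ : ℝ} (hσ : 0 ≤ σ) :
    Xi Q B H lam c b μ x ς σ ≤ qfun Q c x + μ * gfun B lam x := by
  rw [Xi_eq hμ.ne', gfun]
  set t := (1/2) * ((B *ᵥ x) ⬝ᵥ (B *ᵥ x)) - lam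
  have hyoung : ς * t - ς ^ 2 / 2 ≤ (1/2) * t ^ 2 := by nlinarith [sq_nonneg (t - ς)]
  nlinarith [mul_le_mul_of_nonneg_left hyoung hμ.le, mul_nonneg hσ (sub_nonneg.mpr hx)]

end WeakDuality

theorem stmt_11_general {n m : ℕ}
    (Q : Matrix (Fin n) (Fin n) ℝ)
    (B : Matrix (Fin m) (Fin n) ℝ)
    (H : Matrix (Fin n) (Fin n) ℝ)
    (lam : ℝ) (c b : Fin n → ℝ)
    (μ : ℝ) (hμ : 0 < μ) :
    ∀ x : Fin n → ℝ, 1/μ ≤ hfun H b x → ∀ ς σ : ℝ, (ς, σ) ∈ Smu Q B H lam μ →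
      Pd Q B H lam c b μ ς σ ≤ qfun Q c x + μ * gfun B lam x := by
  rintro x hx ς σ ⟨-, hσ, hG⟩
  exact (Pd_le_Xi hG x).trans (Xi_le_of_le_hfun hμ hx ς hσ)

/-- weak duality inequality: `P^d_μ(ς,σ) ≤ P_μ(x)` for all primal
feasible `x` and all `(ς,σ) ∈ S_μ⁺`. -/
theorem stmt_11 {n m : ℕ} (hn : 0 < n) (hm : 0 < m)
    (Q : Matrix (Fin n) (Fin n) ℝ) (hQsymm : Q.IsSymm)
    (B : Matrix (Fin m) (Fin n) ℝ)
    (H : Matrix (Fin n) (Fin n) ℝ) (hHsymm : H.IsSymm) (hHneg : (-H).PosDef)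
    (lam : ℝ) (hlam : 0 ≤ lam) (c b : Fin n → ℝ)
    (μ : ℝ) (hμ : 0 < μ) :
    ∀ x : Fin n → ℝ, 1/μ ≤ hfun H b x → ∀ ς σ : ℝ, (ς, σ) ∈ Smu Q B H lam μ →
      Pd Q B H lam c b μ ς σ ≤ qfun Q c x + μ * gfun B lam x :=
  stmt_11_general Q B H lam c b μ hμ
end
end

section
/- (Gradient formulas for the canonical dual function) Fix μ > 0 and (ς₀,σ₀) ∈ ℝ² such that G_μ(ς₀,σ₀) is positive definite, and set x̄ = G_μ(ς₀,σ₀)⁻¹(c − σ₀b). Then the function ς ↦ P^d_μ(ς,σ₀) is differentiable at ς₀ with derivative μ(½|Bx̄|² − λ − ς₀), and the function σ ↦ P^d_μ(ς₀,σ) is differentiable at σ₀ with derivative 1/μ − h(x̄). -/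
open Matrix Set Filter

noncomputable section

/-! Both formulas are one computation. Since `d(G⁻¹) = −G⁻¹ G' G⁻¹`, for symmetric invertible
`G` and `x = G⁻¹v` one gets `d/ds (vᵀG⁻¹v) = 2 v'ᵀx − xᵀG'x`. In `ς` the vector `v = c − σb` is
constant and `G' = μ BᵀB`; in `σ` one has `v' = −b` and `G' = −H`. -/

-- Any norm would do: this one makes square matrices a complete normed algebra, where
-- inversion is differentiable.
attribute [local instance] Matrix.linftyOpNormedRing Matrix.linftyOpNormedAlgebra

section MatrixCalculus

variable {𝕜 : Type*} [RCLike 𝕜]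
  {ι : Type*} [Fintype ι] [DecidableEq ι] {t : 𝕜}

theorem HasDerivAt.matrix_inv {G : 𝕜 → Matrix ι ι 𝕜} {G' : Matrix ι ι 𝕜}
    (hG : HasDerivAt G G' t) (hGt : IsUnit (G t)) :
    HasDerivAt (fun s => (G s)⁻¹) (-((G t)⁻¹ * G' * (G t)⁻¹)) t := by
  obtain ⟨u, hu⟩ := hGt
  have hinv : ((u⁻¹ : (Matrix ι ι 𝕜)ˣ) : Matrix ι ι 𝕜) = (G t)⁻¹ := by
    rw [coe_units_inv, hu]
  have h := (hu ▸ hasFDerivAt_ringInverse (𝕜 := 𝕜) u : HasFDerivAt _ _ (G t)).comp_hasDerivAt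
    t hG
  simp only [Function.comp_def, hinv, ← nonsing_inv_eq_ringInverse] at h
  exact h

theorem HasDerivAt.matrix_apply {W : 𝕜 → Matrix ι ι 𝕜} {W' : Matrix ι ι 𝕜}
    (hW : HasDerivAt W W' t) (i j : ι) : HasDerivAt (fun s => W s i j) (W' i j) t :=
  (entryLinearMap 𝕜 𝕜 i j).toContinuousLinearMap.hasFDerivAt.comp_hasDerivAt t hW

theorem HasDerivAt.dotProduct_mulVec {v w : 𝕜 → ι → 𝕜} {v' w' : ι → 𝕜}
    {W : 𝕜 → Matrix ι ι 𝕜} {W' : Matrix ι ι 𝕜}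
    (hv : HasDerivAt v v' t) (hW : HasDerivAt W W' t) (hw : HasDerivAt w w' t) :
    HasDerivAt (fun s => v s ⬝ᵥ (W s *ᵥ w s))
      (v' ⬝ᵥ (W t *ᵥ w t) + v t ⬝ᵥ (W' *ᵥ w t) + v t ⬝ᵥ (W t *ᵥ w')) t := by
  have hsum : HasDerivAt (fun s => ∑ i, ∑ j, v s i * W s i j * w s j)
      (∑ i, ∑ j, (v' i * W t i j * w t j + v t i * W' i j * w t j
        + v t i * W t i j * w' j)) t :=
    HasDerivAt.fun_sum fun i _ => HasDerivAt.fun_sum fun j _ =>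
      (((hasDerivAt_pi.1 hv i).mul (hW.matrix_apply i j)).mul
        (hasDerivAt_pi.1 hw j)).congr_deriv (by simp only [Pi.mul_apply]; ring)
  convert hsum using 1
  · simp only [dotProduct, mulVec, Finset.mul_sum, mul_assoc]
  · simp only [dotProduct, mulVec, Finset.mul_sum, Finset.sum_add_distrib, mul_assoc]

theorem HasDerivAt.dotProduct_inv_mulVec {v : 𝕜 → ι → 𝕜} {v' : ι → 𝕜}
    {G : 𝕜 → Matrix ι ι 𝕜} {G' : Matrix ι ι 𝕜} {x : ι → 𝕜}
    (hv : HasDerivAt v v' t) (hG : HasDerivAt G G' t) (hGt : IsUnit (G t))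
    (hsymm : (G t)ᵀ = G t) (hx : x = (G t)⁻¹ *ᵥ v t) :
    HasDerivAt (fun s => v s ⬝ᵥ ((G s)⁻¹ *ᵥ v s)) (2 * (v' ⬝ᵥ x) - x ⬝ᵥ (G' *ᵥ x)) t := by
  have hvx : ∀ w, v t ⬝ᵥ ((G t)⁻¹ *ᵥ w) = x ⬝ᵥ w := fun w => by
    rw [Matrix.dotProduct_mulVec, hx, ← vecMul_transpose, transpose_nonsing_inv, hsymm]
  refine (hv.dotProduct_mulVec (hG.matrix_inv hGt) hv).congr_deriv ?_
  rw [← hx, neg_mulVec, ← mulVec_mulVec, ← mulVec_mulVec, ← hx, dotProduct_neg, hvx, hvx,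
    dotProduct_comm x v']
  ring

end MatrixCalculus

theorem Matrix.dotProduct_transpose_mul_mulVec {R : Type*} [CommSemiring R] {ι κ : Type*}
    [Fintype ι] [Fintype κ] (B : Matrix κ ι R) (x : ι → R) :
    x ⬝ᵥ ((Bᵀ * B) *ᵥ x) = (B *ᵥ x) ⬝ᵥ (B *ᵥ x) := by
  rw [← mulVec_mulVec, Matrix.dotProduct_mulVec, vecMul_transpose]

section CanonicalDual

variable {n m : ℕ} (Q : Matrix (Fin n) (Fin n) ℝ) (B : Matrix (Fin m) (Fin n) ℝ)
  (H : Matrix (Fin n) (Fin n) ℝ) (μ : ℝ)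

theorem hasDerivAt_Gmu_left (ς₀ σ : ℝ) :
    HasDerivAt (fun ς => Gmu Q B H μ ς σ) (μ • (Bᵀ * B)) ς₀ := by
  have h :=
    ((((hasDerivAt_id ς₀).const_mul μ).smul_const (Bᵀ * B)).const_add Q).sub_const (σ • H)
  rw [mul_one] at h
  exact h

theorem hasDerivAt_Gmu_right (ς σ₀ : ℝ) :
    HasDerivAt (fun σ => Gmu Q B H μ ς σ) (-H) σ₀ := by
  have h := ((hasDerivAt_id σ₀).smul_const H).const_sub (Q + (μ * ς) • (Bᵀ * B))
  rw [one_smul] at h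
  exact h

end CanonicalDual

theorem stmt_13_general {n m : ℕ}
    (Q : Matrix (Fin n) (Fin n) ℝ)
    (B : Matrix (Fin m) (Fin n) ℝ)
    (H : Matrix (Fin n) (Fin n) ℝ)
    (lam : ℝ) (c b : Fin n → ℝ)
    (μ : ℝ)
    (ς₀ σ₀ : ℝ) (hpd : (Gmu Q B H μ ς₀ σ₀).PosDef)
    (xbar : Fin n → ℝ) (hxbar : xbar = (Gmu Q B H μ ς₀ σ₀)⁻¹ *ᵥ (c - σ₀ • b)) :
    HasDerivAt (fun ς => Pd Q B H lam c b μ ς σ₀)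
      (μ * ((1/2) * ((B *ᵥ xbar) ⬝ᵥ (B *ᵥ xbar)) - lam - ς₀)) ς₀ ∧
    HasDerivAt (fun σ => Pd Q B H lam c b μ ς₀ σ)
      (1/μ - hfun H b xbar) σ₀ := by
  have hunit := hpd.isUnit
  have hsymm : (Gmu Q B H μ ς₀ σ₀)ᵀ = Gmu Q B H μ ς₀ σ₀ := by
    simpa only [IsHermitian, conjTranspose_eq_transpose_of_trivial] using hpd.isHermitian
  constructor
  · have hq := (hasDerivAt_const ς₀ (c - σ₀ • b)).dotProduct_inv_mulVec
      (hasDerivAt_Gmu_left Q B H μ ς₀ σ₀) hunit hsymm hxbar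
    have h := (((hq.const_mul (-(1/2))).sub ((hasDerivAt_id ς₀).const_mul (μ * lam))).sub
      ((hasDerivAt_pow 2 ς₀).const_mul (μ/2))).add_const (σ₀/μ)
    refine h.congr_deriv ?_
    rw [zero_dotProduct, smul_mulVec, dotProduct_smul, smul_eq_mul,
      dotProduct_transpose_mul_mulVec]
    push_cast
    ring
  · have hv : HasDerivAt (fun σ : ℝ => c - σ • b) (-b) σ₀ := by
      have h := ((hasDerivAt_id σ₀).smul_const b).const_sub c
      rw [one_smul] at h
      exact h
    have hq := hv.dotProduct_inv_mulVec (hasDerivAt_Gmu_right Q B H μ ς₀ σ₀) hunit hsymm hxbar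
    have h := (((hq.const_mul (-(1/2))).sub_const (μ * lam * ς₀)).sub_const
      ((μ/2) * ς₀^2)).add ((hasDerivAt_id σ₀).div_const μ)
    refine h.congr_deriv ?_
    simp only [hfun, neg_mulVec, dotProduct_neg, neg_dotProduct, dotProduct_comm b]
    ring

/-- gradient formulas: the partial derivatives of `P^d_μ` at a point
`(ς₀,σ₀)` with `G_μ(ς₀,σ₀) ≻ 0` are `μ(½|Bx̄|² − λ − ς₀)` and `1/μ − h(x̄)`,
where `x̄ = G_μ(ς₀,σ₀)⁻¹(c − σ₀b)`. -/
theorem stmt_13 {n m : ℕ} (hn : 0 < n) (hm : 0 < m)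
    (Q : Matrix (Fin n) (Fin n) ℝ) (hQsymm : Q.IsSymm)
    (B : Matrix (Fin m) (Fin n) ℝ)
    (H : Matrix (Fin n) (Fin n) ℝ) (hHsymm : H.IsSymm) (hHneg : (-H).PosDef)
    (lam : ℝ) (hlam : 0 ≤ lam) (c b : Fin n → ℝ)
    (μ : ℝ) (hμ : 0 < μ)
    (ς₀ σ₀ : ℝ) (hpd : (Gmu Q B H μ ς₀ σ₀).PosDef)
    (xbar : Fin n → ℝ) (hxbar : xbar = (Gmu Q B H μ ς₀ σ₀)⁻¹ *ᵥ (c - σ₀ • b)) :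
    HasDerivAt (fun ς => Pd Q B H lam c b μ ς σ₀)
      (μ * ((1/2) * ((B *ᵥ xbar) ⬝ᵥ (B *ᵥ xbar)) - lam - ς₀)) ς₀ ∧
    HasDerivAt (fun σ => Pd Q B H lam c b μ ς₀ σ)
      (1/μ - hfun H b xbar) σ₀ :=
  stmt_13_general Q B H lam c b μ ς₀ σ₀ hpd xbar hxbar
end
end
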